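/- Let f : ℕ → ℝ be such that ∑_{n≥1} |Δ²f(n)| < ∞, and suppose the limit ψ := lim_{n→∞} Δf(n) exists and satisfies ψ ∉ ℤ. Then the sequence of exponential sums { ∑_{n=1}^{N} e(f(n)) : N ≥ 1 } is bounded. -/

import Mathlib

/-!
Write `a n = e(f n)` and `u n = e(Δf n)`, so that `a (n + 1) = a n * u n` and `u n → e(ψ) ≠ 1`.
For large `n` the weights `g n = (1 - u n)⁻¹` are bounded, and `a n = (a n - a (n + 1)) * g n`;
summation by parts turns `∑ a n` into boundary terms plus `∑ a (n + 1) * (g (n + 1) - g n)`, and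
`|g (n + 1) - g n| ≪ |u (n + 1) - u n| ≪ |Δ²f n|` is summable.
-/

open Filter

noncomputable def e (x : ℝ) : ℂ := Complex.exp (2 * Real.pi * Complex.I * x)

open Finset Topology

theorem e_add (x y : ℝ) : e (x + y) = e x * e y := by
  simp only [e, ← Complex.exp_add]; push_cast; ring_nf

theorem e_eq_exp_I_mul (x : ℝ) : e x = Complex.exp (Complex.I * (2 * Real.pi * x : ℝ)) := by
  simp only [e]; push_cast; ring_nf

theorem norm_e (x : ℝ) : ‖e x‖ = 1 := by
  rw [e_eq_exp_I_mul, mul_comm, Complex.norm_exp_ofReal_mul_I]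

theorem continuous_e : Continuous e := by
  unfold e; fun_prop

theorem e_eq_one_iff {x : ℝ} : e x = 1 ↔ ∃ m : ℤ, x = m := by
  have h2πI : 2 * (Real.pi : ℂ) * Complex.I ≠ 0 := by simp [Real.pi_ne_zero]
  simp only [e, Complex.exp_eq_one_iff, mul_comm _ (2 * (Real.pi : ℂ) * Complex.I),
    mul_right_inj' h2πI]
  norm_cast

theorem norm_e_sub_e_le (x y : ℝ) : ‖e x - e y‖ ≤ 2 * Real.pi * |x - y| := by
  have hx : e x = e (x - y) * e y := by rw [← e_add, sub_add_cancel]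
  calc ‖e x - e y‖ = ‖e (x - y) - 1‖ := by rw [hx, ← sub_one_mul, norm_mul, norm_e, mul_one]
    _ ≤ ‖2 * Real.pi * (x - y)‖ := by
        rw [e_eq_exp_I_mul]; exact Real.norm_exp_I_mul_ofReal_sub_one_le
    _ = 2 * Real.pi * |x - y| := by
        rw [Real.norm_eq_abs, abs_mul, abs_of_pos Real.two_pi_pos]

section SummationByParts

variable {𝕜 : Type*} [NormedField 𝕜] {a u : ℕ → 𝕜}

theorem norm_inv_sub_inv_le {x y : 𝕜} {δ : ℝ} (hδ : 0 < δ) (hx : δ ≤ ‖x‖) (hy : δ ≤ ‖y‖) :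
    ‖x⁻¹ - y⁻¹‖ ≤ ‖x - y‖ / δ ^ 2 := by
  have hx₀ : x ≠ 0 := norm_pos_iff.mp (hδ.trans_le hx)
  have hy₀ : y ≠ 0 := norm_pos_iff.mp (hδ.trans_le hy)
  rw [inv_sub_inv hx₀ hy₀, norm_div, norm_mul, norm_sub_rev, sq]
  gcongr

theorem norm_sum_range_le_of_le_norm_one_sub {δ : ℝ} (hδ : 0 < δ) (ha : ∀ n, ‖a n‖ ≤ 1)
    (hau : ∀ n, a (n + 1) = a n * u n) (hu : ∀ n, δ ≤ ‖1 - u n‖)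
    (hvar : Summable fun n => ‖u (n + 1) - u n‖) (N : ℕ) :
    ‖∑ n ∈ range N, a n‖ ≤ 2 / δ + (∑' n, ‖u (n + 1) - u n‖) / δ ^ 2 := by
  set g : ℕ → 𝕜 := fun n => (1 - u n)⁻¹
  have hne : ∀ n, 1 - u n ≠ 0 := fun n => norm_pos_iff.mp (hδ.trans_le (hu n))
  have hg : ∀ n, ‖g n‖ ≤ δ⁻¹ := fun n => by
    simpa only [g, norm_inv] using inv_anti₀ hδ (hu n)
  have hg_sub : ∀ n, ‖g (n + 1) - g n‖ ≤ ‖u (n + 1) - u n‖ / δ ^ 2 := fun n => by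
    simpa only [sub_sub_sub_cancel_left, norm_sub_rev (u n)] using
      norm_inv_sub_inv_le hδ (hu (n + 1)) (hu n)
  have hstep : ∀ n, a n = (a n * g n - a (n + 1) * g (n + 1)) + a (n + 1) * (g (n + 1) - g n) :=
    fun n => by
      have : (1 - u n) * g n = 1 := mul_inv_cancel₀ (hne n)
      rw [hau]; linear_combination (-a n) * this
  have hboundary : ‖a 0 * g 0 - a N * g N‖ ≤ 2 / δ := by
    calc ‖a 0 * g 0 - a N * g N‖ ≤ ‖a 0‖ * ‖g 0‖ + ‖a N‖ * ‖g N‖ := by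
          simpa only [norm_mul] using norm_sub_le (a 0 * g 0) (a N * g N)
      _ ≤ 1 * δ⁻¹ + 1 * δ⁻¹ := by gcongr <;> simp [ha, hg]
      _ = 2 / δ := by ring
  have hvariation : ‖∑ n ∈ range N, a (n + 1) * (g (n + 1) - g n)‖
      ≤ (∑' n, ‖u (n + 1) - u n‖) / δ ^ 2 := by
    calc ‖∑ n ∈ range N, a (n + 1) * (g (n + 1) - g n)‖
        ≤ ∑ n ∈ range N, ‖u (n + 1) - u n‖ / δ ^ 2 := norm_sum_le_of_le _ fun n _ => by
          rw [norm_mul]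
          exact (mul_le_of_le_one_left (norm_nonneg _) (ha _)).trans (hg_sub n)
      _ ≤ (∑' n, ‖u (n + 1) - u n‖) / δ ^ 2 := by
          rw [← sum_div]
          gcongr
          exact hvar.sum_le_tsum _ fun n _ => norm_nonneg _
  calc ‖∑ n ∈ range N, a n‖
      = ‖(a 0 * g 0 - a N * g N) + ∑ n ∈ range N, a (n + 1) * (g (n + 1) - g n)‖ := by
        rw [sum_congr rfl fun n _ => hstep n, sum_add_distrib,
          sum_range_sub' (fun n => a n * g n)]
    _ ≤ _ := (norm_add_le _ _).trans (add_le_add hboundary hvariation)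

theorem norm_sum_range_le_add_of_shift {E : Type*} [SeminormedAddCommGroup E] {a : ℕ → E}
    (ha : ∀ n, ‖a n‖ ≤ 1) {k : ℕ} {C : ℝ} (h : ∀ N, ‖∑ n ∈ range N, a (k + n)‖ ≤ C) (N : ℕ) :
    ‖∑ n ∈ range N, a n‖ ≤ k + C := by
  have hhead : ∀ m ≤ k, ‖∑ n ∈ range m, a n‖ ≤ k := fun m hm => by
    calc ‖∑ n ∈ range m, a n‖ ≤ ∑ n ∈ range m, (1 : ℝ) := norm_sum_le_of_le _ fun n _ => ha n
      _ ≤ k := by simpa using hm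
  have hC : 0 ≤ C := by simpa using h 0
  rcases le_total N k with hN | hN
  · linarith [hhead N hN]
  · obtain ⟨m, rfl⟩ := Nat.exists_eq_add_of_le hN
    rw [sum_range_add]
    exact (norm_add_le _ _).trans (add_le_add (hhead k le_rfl) (h m))

theorem exists_norm_sum_range_le_of_tendsto {w : 𝕜} (hw : w ≠ 1) (hu : Tendsto u atTop (𝓝 w))
    (ha : ∀ n, ‖a n‖ ≤ 1) (hau : ∀ n, a (n + 1) = a n * u n)
    (hvar : Summable fun n => ‖u (n + 1) - u n‖) : ∃ M, ∀ N, ‖∑ n ∈ range N, a n‖ ≤ M := by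
  have hw' : 0 < ‖1 - w‖ := norm_pos_iff.mpr (sub_ne_zero.mpr hw.symm)
  obtain ⟨k, hk⟩ := eventually_atTop.mp <|
    (tendsto_const_nhds.sub hu).norm.eventually_const_le (half_lt_self hw')
  have hvar' : Summable fun n => ‖u (k + n + 1) - u (k + n)‖ := by
    simpa only [add_comm k] using (summable_nat_add_iff k).mpr hvar
  exact ⟨k + _, norm_sum_range_le_add_of_shift ha <| norm_sum_range_le_of_le_norm_one_sub
    (half_pos hw') (fun n => ha _) (fun n => by rw [← add_assoc, hau])
    (fun n => hk _ (Nat.le_add_right k n)) hvar'⟩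

end SummationByParts

/-- if `∑_{n≥1} |Δ²f(n)| < ∞` and `Δf(n) → ψ` with `ψ ∉ ℤ`, then the
exponential sums `∑_{n=1}^{N} e(f(n))` are bounded. -/
theorem stmt_4 (f : ℕ → ℝ)
    (hsum : Summable fun n : ℕ => |f (n + 1 + 2) - 2 * f (n + 1 + 1) + f (n + 1)|)
    (ψ : ℝ) (hψ : Tendsto (fun n : ℕ => f (n + 1) - f n) atTop (nhds ψ))
    (hnonint : ∀ m : ℤ, ψ ≠ (m : ℝ)) :
    ∃ M : ℝ, ∀ N : ℕ, 1 ≤ N →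
      ‖∑ n ∈ Finset.Icc 1 N, e (f n)‖ ≤ M := by
  set d : ℕ → ℝ := fun n => f (n + 1) - f n
  have hrec : ∀ n, e (f (n + 1 + 1)) = e (f (n + 1)) * e (d (n + 1)) := fun n => by
    rw [← e_add, add_sub_cancel]
  have hlim : Tendsto (fun n => e (d (n + 1))) atTop (𝓝 (e ψ)) :=
    (continuous_e.tendsto ψ).comp ((tendsto_add_atTop_iff_nat 1).mpr hψ)
  have hvar : Summable fun n => ‖e (d (n + 1 + 1)) - e (d (n + 1))‖ :=
    (hsum.mul_left (2 * Real.pi)).of_nonneg_of_le (fun _ => norm_nonneg _) fun n =>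
      (norm_e_sub_e_le _ _).trans_eq (by simp only [d]; ring_nf)
  have he : e ψ ≠ 1 := fun h => by
    obtain ⟨m, hm⟩ := e_eq_one_iff.mp h
    exact hnonint m hm
  obtain ⟨M, hM⟩ := exists_norm_sum_range_le_of_tendsto (a := fun n => e (f (n + 1))) he hlim
    (fun n => (norm_e _).le) hrec hvar
  refine ⟨M, fun N _ => ?_⟩
  rw [← Ico_add_one_right_eq_Icc, sum_Ico_eq_sum_range, Nat.add_sub_cancel]
  simpa only [add_comm 1] using hM N
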